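/- arXiv:0907.1307 — 2 statements merged into one kernel-verified Lean document; each statement's English description precedes it below -/
import Mathlib

section
/- For every nonempty finite shape X ⊆ ℤ², the full grid graph on the 2-scaling X² of X contains a Hamiltonian cycle. -/
/-- The set of unit vectors in ℤ². -/
def unitVectors : Set (ℤ × ℤ) := {(0, 1), (1, 0), (0, -1), (-1, 0)}

/-- The full grid graph on a set `V ⊆ ℤ²`: vertices are the points of `V`,
with an edge between `a` and `b` exactly when `a - b` is a unit vector. -/
def fullGridGraph (V : Set (ℤ × ℤ)) : SimpleGraph V :=
  SimpleGraph.fromRel (fun a b => (a : ℤ × ℤ) - (b : ℤ × ℤ) ∈ unitVectors)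

/-- A shape is a set of points of ℤ² whose full grid graph is connected. -/
def IsShape (X : Set (ℤ × ℤ)) : Prop := (fullGridGraph X).Connected

/-- The `c`-scaling of `X ⊆ ℤ²`: all points whose coordinatewise floor-division
by `c` lands in `X`. -/
def scale (c : ℕ) (X : Set (ℤ × ℤ)) : Set (ℤ × ℤ) :=
  {p : ℤ × ℤ | (Int.fdiv p.1 (c : ℤ), Int.fdiv p.2 (c : ℤ)) ∈ X}

/-!
Induction on the number of cells. A finite shape with at least two cells has a cell `p` (a leaf
of a spanning tree) whose removal leaves a shape `Y`; let `q ∈ Y` be a neighbour of `p` and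
`d = p - q`. The induction carries a stronger invariant: for every cell `x ∈ Y` and unit vector `e`
with `x + e ∉ Y`, the Hamiltonian cycle of `Y²` uses an edge of the 2×2 block of `x` on its side
facing `x + e`. Replacing this edge `{a, b}` for `(q, d)` by the detour
`a, a + d, a + 2d, b + 2d, b + d, b` through the block of `p` gives a Hamiltonian cycle of `X²`;
the detour runs along the three sides of the new block not facing `q`, and the removed edge serves
no other side, so the invariant persists.
-/

namespace SimpleGraph.Walk

variable {α β : Type*} {G : SimpleGraph α} {H : SimpleGraph β}

lemma IsCycle.eq_snd_or_eq_penultimate_of_mem_edges {u v : α} {c : G.Walk u u} (hc : c.IsCycle)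
    (he : s(u, v) ∈ c.edges) : v = c.snd ∨ v = c.penultimate := by
  cases c with
  | nil => simp at he
  | cons h t =>
    obtain ⟨ht, -⟩ := (cons_isCycle_iff t h).mp hc
    rw [edges_cons, List.mem_cons] at he
    rcases he with he | he
    · rw [Sym2.eq_iff] at he
      rcases he with ⟨-, rfl⟩ | ⟨rfl, -⟩
      · exact Or.inl (by simp)
      · exact absurd rfl h.ne
    · right
      rw [penultimate_cons_of_not_nil _ _ (fun hn => h.ne hn.eq.symm)]
      exact ht.eq_penultimate_of_mem_edges he

variable [DecidableEq α]

lemma IsHamiltonianCycle.reverse {x : α} {c : G.Walk x x} (hc : c.IsHamiltonianCycle) :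
    c.reverse.IsHamiltonianCycle := by
  have := hc.finite
  have := Fintype.ofFinite α
  rw [isHamiltonianCycle_iff_isCycle_and_length_eq] at hc ⊢
  exact ⟨hc.1.reverse, by rw [length_reverse, hc.2]⟩

lemma IsHamiltonianCycle.exists_cons_of_mem_edges {x u v : α} {c : G.Walk x x}
    (hc : c.IsHamiltonianCycle) (he : s(u, v) ∈ c.edges) :
    ∃ (h : G.Adj u v) (t : G.Walk v u), (cons h t).IsHamiltonianCycle ∧
      c.edges ⊆ (cons h t).edges := by
  suffices ∃ c' : G.Walk u u, c'.IsHamiltonianCycle ∧ c'.snd = v ∧ c.edges ⊆ c'.edges by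
    obtain ⟨c', hc', rfl, hsub⟩ := this
    have hnil := hc'.isCycle.not_nil
    exact ⟨c'.adj_snd hnil, c'.tail, by rwa [cons_tail_eq _ hnil], by rwa [cons_tail_eq _ hnil]⟩
  have hu : u ∈ c.support := c.fst_mem_support_of_mem_edges he
  have hrot : (c.rotate u hu).IsHamiltonianCycle := IsHamiltonianCycle.rotate hu hc
  have hsub : c.edges ⊆ (c.rotate u hu).edges := fun e he =>
    (c.rotate_edges u hu).perm.mem_iff.mpr he
  obtain hv | hv := hrot.isCycle.eq_snd_or_eq_penultimate_of_mem_edges (hsub he)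
  · exact ⟨_, hrot, hv.symm, hsub⟩
  · refine ⟨_, hrot.reverse, by rw [snd_reverse, hv], fun e he => ?_⟩
    rw [edges_reverse, List.mem_reverse]
    exact hsub he

lemma IsPath.count_support_tail {u v : α} {p : G.Walk u v} (hp : p.IsPath) (z : α) :
    p.support.tail.count z = if z ∈ p.support ∧ z ≠ u then 1 else 0 := by
  have hnd := hp.support_nodup
  rw [← cons_tail_support, List.nodup_cons] at hnd
  simp only [hnd.2.count, mem_support_iff]
  grind

lemma isHamiltonianCycle_of_count_support_tail {x : α} {c : G.Walk x x} (hlen : 3 ≤ c.length)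
    (hcount : ∀ z, c.support.tail.count z = 1) : c.IsHamiltonianCycle := by
  have hnil : ¬c.Nil := fun h => by rw [h.length_eq_zero] at hlen; omega
  rw [isHamiltonianCycle_iff_isCycle_and_support_count_tail_eq_one]
  refine ⟨isCycle_iff_isPath_tail_and_le_length.mpr ⟨?_, hlen⟩, hcount⟩
  rw [isPath_def, support_tail_of_not_nil _ hnil, List.nodup_iff_count_le_one]
  exact fun z => (hcount z).le

/-- The new cycle is `p` followed by the image of `c` with its edge `uv` removed. -/
theorem IsHamiltonianCycle.exists_splice [DecidableEq β] (f : G →g H) (hf : Function.Injective f)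
    {x u v : α} {c : G.Walk x x} (hc : c.IsHamiltonianCycle) (he : s(u, v) ∈ c.edges)
    {p : H.Walk (f u) (f v)} (hp : p.IsPath) (hp_range : ∀ w, f w ∈ p.support → w = u ∨ w = v)
    (hp_cover : ∀ z, z ∉ Set.range f → z ∈ p.support) :
    ∃ (y : β) (c' : H.Walk y y), c'.IsHamiltonianCycle ∧ p.edges ⊆ c'.edges ∧
      ∀ e ∈ c.edges, e ≠ s(u, v) → e.map f ∈ c'.edges := by
  obtain ⟨h, t, hct, hsub⟩ := hc.exists_cons_of_mem_edges he
  have ht : t.IsHamiltonian := by simpa [IsHamiltonian] using hct.isHamiltonian_tail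
  have ht_len : 2 ≤ t.length := by simpa using hct.isCycle.three_le_length
  have hp_len : p.length ≠ 0 := fun h0 => h.ne (hf (eq_of_length_eq_zero h0))
  have hcount : ∀ z, p.support.tail.count z + (t.map f).support.tail.count z = 1 := by
    intro z
    rw [hp.count_support_tail, (ht.isPath.map hf).count_support_tail]
    by_cases hz : z ∈ Set.range f
    · obtain ⟨w, rfl⟩ := hz
      have hw : f w ∈ (t.map f).support := by simp [ht.mem_support]
      simp only [hw, true_and, hf.ne_iff]
      by_cases hwv : w = v
      · simp [hwv, h.ne.symm]
      · grind
    · have hz' : z ∉ (t.map f).support := by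
        rw [support_map, List.mem_map]
        rintro ⟨w, -, rfl⟩
        exact hz ⟨w, rfl⟩
      grind
  refine ⟨f u, p.append (t.map f), isHamiltonianCycle_of_count_support_tail ?_ fun z => ?_,
    ?_, fun e he hne => ?_⟩
  · rw [length_append, length_map]
    omega
  · rw [tail_support_append, List.count_append, hcount]
  · rw [edges_append]
    exact List.subset_append_left _ _
  · have he' := hsub he
    rw [edges_cons, List.mem_cons] at he'
    rw [edges_append, edges_map]
    exact List.mem_append_right _ (List.mem_map_of_mem (he'.resolve_left hne))

end SimpleGraph.Walk

open SimpleGraph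

lemma mem_unitVectors {d : ℤ × ℤ} :
    d ∈ unitVectors ↔ d = (0, 1) ∨ d = (1, 0) ∨ d = (0, -1) ∨ d = (-1, 0) := by
  simp [unitVectors]

lemma neg_mem_unitVectors {d : ℤ × ℤ} (hd : d ∈ unitVectors) : -d ∈ unitVectors := by
  rw [mem_unitVectors] at hd ⊢
  rcases hd with rfl | rfl | rfl | rfl <;> simp

lemma zero_notMem_unitVectors : (0 : ℤ × ℤ) ∉ unitVectors := by
  simp [mem_unitVectors, Prod.ext_iff]

lemma fullGridGraph_adj {V : Set (ℤ × ℤ)} {a b : V} :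
    (fullGridGraph V).Adj a b ↔ (a : ℤ × ℤ) - b ∈ unitVectors := by
  rw [fullGridGraph, fromRel_adj]
  refine ⟨fun ⟨_, h⟩ => h.elim id fun h => by simpa using neg_mem_unitVectors h,
    fun h => ⟨fun hab => ?_, Or.inl h⟩⟩
  rw [hab, sub_self] at h
  exact zero_notMem_unitVectors h

def fullGridGraphHomOfSubset {A B : Set (ℤ × ℤ)} (h : A ⊆ B) :
    fullGridGraph A →g fullGridGraph B where
  toFun := Set.inclusion h
  map_rel' := fullGridGraph_adj.mpr ∘ fullGridGraph_adj.mp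

@[simp]
lemma coe_fullGridGraphHomOfSubset {A B : Set (ℤ × ℤ)} (h : A ⊆ B) (a : A) :
    ((fullGridGraphHomOfSubset h a : B) : ℤ × ℤ) = a :=
  rfl

lemma IsShape.exists_isShape_sdiff_singleton {X : Set (ℤ × ℤ)} (hX : IsShape X)
    (hfin : X.Finite) (hnt : X.Nontrivial) :
    ∃ p ∈ X, ∃ q ∈ X \ {p}, p - q ∈ unitVectors ∧ IsShape (X \ {p}) := by
  have := hfin.to_subtype
  have := Set.nontrivial_coe_sort.mpr hnt
  obtain ⟨p, hp⟩ := hX.exists_connected_induce_compl_singleton_of_finite_nontrivial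
  let g : (fullGridGraph X).induce {p}ᶜ →g fullGridGraph (X \ {(p : ℤ × ℤ)}) :=
    { toFun := fun z => ⟨z.1, z.1.2, fun h => z.2 (Subtype.ext h)⟩
      map_rel' := fun h => fullGridGraph_adj.mpr ((fullGridGraph_adj (V := X)).mp h) }
  have hg : Function.Surjective g := fun z =>
    ⟨⟨⟨z, z.2.1⟩, fun h => z.2.2 (congrArg Subtype.val h)⟩, rfl⟩
  obtain ⟨⟨w, hw⟩⟩ := hp.nonempty
  obtain ⟨P⟩ := hX.preconnected p w
  have hP : ¬P.Nil := Walk.not_nil_of_ne (Ne.symm hw)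
  exact ⟨p, p.2, P.snd, ⟨P.snd.2, fun h => (P.adj_snd hP).ne (Subtype.ext h.symm)⟩,
    fullGridGraph_adj.mp (P.adj_snd hP), hp.map g hg⟩

/-- The point of `X` whose 2×2 block in `X²` contains `z`. Integer division by the positive `2`
rounds down, as `Int.fdiv` does in `scale`. -/
def cell (z : ℤ × ℤ) : ℤ × ℤ := (z.1 / 2, z.2 / 2)

lemma mem_scale_two {X : Set (ℤ × ℤ)} {z : ℤ × ℤ} : z ∈ scale 2 X ↔ cell z ∈ X := by
  simp [scale, cell, Int.fdiv_eq_ediv_of_nonneg]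

def IsSideEdge (x d : ℤ × ℤ) (e : Sym2 (ℤ × ℤ)) : Prop :=
  ∀ z ∈ e, cell z = x ∧ cell (z + d) = x + d

lemma isSideEdge_mk {x d a b : ℤ × ℤ} :
    IsSideEdge x d s(a, b) ↔
      (cell a = x ∧ cell (a + d) = x + d) ∧ cell b = x ∧ cell (b + d) = x + d := by
  simp [IsSideEdge]

lemma cell_add_add {z q d : ℤ × ℤ} (hd : d ∈ unitVectors) (hz : cell z = q)
    (hzd : cell (z + d) = q + d) : cell (z + d + d) = q + d := by
  rw [mem_unitVectors] at hd
  obtain ⟨z1, z2⟩ := z; obtain ⟨q1, q2⟩ := q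
  rcases hd with rfl | rfl | rfl | rfl <;>
    simp only [cell, Prod.mk_add_mk, Prod.mk.injEq, add_zero] at hz hzd ⊢ <;> omega

namespace IsSideEdge

variable {q d a b : ℤ × ℤ}

lemma detour_nodup (hside : IsSideEdge q d s(a, b)) (hd : d ∈ unitVectors) (hab : a ≠ b) :
    [a, a + d, a + d + d, b + d + d, b + d, b].Nodup := by
  rw [isSideEdge_mk] at hside
  rw [mem_unitVectors] at hd
  obtain ⟨a1, a2⟩ := a; obtain ⟨b1, b2⟩ := b; obtain ⟨q1, q2⟩ := q
  rcases hd with rfl | rfl | rfl | rfl <;>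
    simp only [cell, Prod.mk_add_mk, Prod.mk.injEq, add_zero, ne_eq, List.nodup_cons,
      List.mem_cons, List.not_mem_nil, List.nodup_nil, true_and, and_true, or_false,
      not_false_eq_true] at hside hab ⊢ <;> omega

lemma eq_of_cell_eq (hside : IsSideEdge q d s(a, b)) (hd : d ∈ unitVectors) (hab : a ≠ b)
    {z : ℤ × ℤ} (hz : cell z = q + d) :
    z = a + d ∨ z = a + d + d ∨ z = b + d + d ∨ z = b + d := by
  rw [isSideEdge_mk] at hside
  rw [mem_unitVectors] at hd
  obtain ⟨a1, a2⟩ := a; obtain ⟨b1, b2⟩ := b; obtain ⟨q1, q2⟩ := q; obtain ⟨z1, z2⟩ := z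
  rcases hd with rfl | rfl | rfl | rfl <;>
    simp only [cell, Prod.mk_add_mk, Prod.mk.injEq, add_zero, ne_eq] at hside hab hz ⊢ <;> omega

lemma exists_detour_side (hside : IsSideEdge q d s(a, b)) (hd : d ∈ unitVectors) (hab : a ≠ b)
    {e : ℤ × ℤ} (he : e ∈ unitVectors) (hne : e ≠ -d) :
    ∃ s ∈ [s(a + d, a + d + d), s(a + d + d, b + d + d), s(b + d + d, b + d)],
      IsSideEdge (q + d) e s := by
  simp only [List.mem_cons, List.not_mem_nil, or_false, exists_eq_or_imp, exists_eq_left,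
    isSideEdge_mk]
  rw [isSideEdge_mk] at hside
  rw [mem_unitVectors] at hd he
  obtain ⟨a1, a2⟩ := a; obtain ⟨b1, b2⟩ := b; obtain ⟨q1, q2⟩ := q
  have hab' : a1 < b1 ∨ b1 < a1 ∨ a2 < b2 ∨ b2 < a2 := by
    simp only [ne_eq, Prod.mk.injEq] at hab
    omega
  rcases hd with rfl | rfl | rfl | rfl <;> rcases he with rfl | rfl | rfl | rfl <;>
    simp only [cell, Prod.mk_add_mk, Prod.mk.injEq, add_zero, ne_eq, Prod.neg_mk, true_and,
      and_true] at hside hne ⊢ <;>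
    rcases hab' with h | h | h | h <;>
    first | (left; omega) | (right; left; omega) | (right; right; omega)

lemma eq_of_isSideEdge (hside : IsSideEdge q d s(a, b)) (hd : d ∈ unitVectors) (hab : a ≠ b)
    {x e : ℤ × ℤ} (he : e ∈ unitVectors) (h : IsSideEdge x e s(a, b)) : x = q ∧ e = d := by
  rw [isSideEdge_mk] at hside h
  rw [mem_unitVectors] at hd he
  obtain ⟨a1, a2⟩ := a; obtain ⟨b1, b2⟩ := b; obtain ⟨q1, q2⟩ := q; obtain ⟨x1, x2⟩ := x
  rcases hd with rfl | rfl | rfl | rfl <;> rcases he with rfl | rfl | rfl | rfl <;>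
    simp only [cell, Prod.mk_add_mk, Prod.mk.injEq, add_zero, ne_eq, true_and, and_true]
      at hside hab h ⊢ <;> omega

end IsSideEdge

lemma exists_detour {V : Set (ℤ × ℤ)} {a b : V} (hab : (fullGridGraph V).Adj a b)
    {d : ℤ × ℤ} (hd : d ∈ unitVectors) (hA : (a : ℤ × ℤ) + d ∈ V) (hB : (a : ℤ × ℤ) + d + d ∈ V)
    (hC : (b : ℤ × ℤ) + d + d ∈ V) (hD : (b : ℤ × ℤ) + d ∈ V)
    (hnd : [(a : ℤ × ℤ), a + d, a + d + d, b + d + d, b + d, b].Nodup) :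
    ∃ P : (fullGridGraph V).Walk a b, P.IsPath ∧
      P.support.map (↑) = [(a : ℤ × ℤ), a + d, a + d + d, b + d + d, b + d, b] ∧
      P.edges.map (Sym2.map (↑)) =
        [s((a : ℤ × ℤ), a + d), s((a : ℤ × ℤ) + d, a + d + d), s((a : ℤ × ℤ) + d + d, b + d + d),
          s((b : ℤ × ℤ) + d + d, b + d), s((b : ℤ × ℤ) + d, b)] := by
  have hneg := neg_mem_unitVectors hd
  have h₁ : (fullGridGraph V).Adj a ⟨_, hA⟩ := fullGridGraph_adj.mpr (by simpa using hneg)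
  have h₂ : (fullGridGraph V).Adj ⟨_, hA⟩ ⟨_, hB⟩ := fullGridGraph_adj.mpr (by simpa using hneg)
  have h₃ : (fullGridGraph V).Adj ⟨_, hB⟩ ⟨_, hC⟩ := fullGridGraph_adj.mpr (by
    simpa [add_sub_add_right_eq_sub] using fullGridGraph_adj.mp hab)
  have h₄ : (fullGridGraph V).Adj ⟨_, hC⟩ ⟨_, hD⟩ := fullGridGraph_adj.mpr (by simpa using hd)
  have h₅ : (fullGridGraph V).Adj ⟨_, hD⟩ b := fullGridGraph_adj.mpr (by simpa using hd)
  refine ⟨.cons h₁ (.cons h₂ (.cons h₃ (.cons h₄ (.cons h₅ .nil)))), ?_, rfl, rfl⟩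
  rw [Walk.isPath_def]
  exact List.Nodup.of_map Subtype.val hnd

def HasBoundaryCycle (X : Set (ℤ × ℤ)) : Prop :=
  ∃ (v : scale 2 X) (c : (fullGridGraph (scale 2 X)).Walk v v), c.IsHamiltonianCycle ∧
    ∀ x ∈ X, ∀ d ∈ unitVectors, x + d ∉ X →
      ∃ e ∈ c.edges.map (Sym2.map (↑)), IsSideEdge x d e

lemma hasBoundaryCycle_singleton (x : ℤ × ℤ) : HasBoundaryCycle {x} := by
  classical
  obtain ⟨x₁, x₂⟩ := x
  have hmem : ∀ z, cell z = (x₁, x₂) → z ∈ scale 2 {(x₁, x₂)} := fun z hz => mem_scale_two.mpr hz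
  let v₀ : scale 2 {(x₁, x₂)} := ⟨(2 * x₁, 2 * x₂), hmem _ (by simp [cell])⟩
  let v₁ : scale 2 {(x₁, x₂)} := ⟨(2 * x₁ + 1, 2 * x₂), hmem _ (by simp [cell]; omega)⟩
  let v₂ : scale 2 {(x₁, x₂)} := ⟨(2 * x₁ + 1, 2 * x₂ + 1), hmem _ (by simp [cell]; omega)⟩
  let v₃ : scale 2 {(x₁, x₂)} := ⟨(2 * x₁, 2 * x₂ + 1), hmem _ (by simp [cell]; omega)⟩
  have h₀₁ : (fullGridGraph _).Adj v₀ v₁ :=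
    fullGridGraph_adj.mpr (by simp [v₀, v₁, mem_unitVectors])
  have h₁₂ : (fullGridGraph _).Adj v₁ v₂ :=
    fullGridGraph_adj.mpr (by simp [v₁, v₂, mem_unitVectors])
  have h₂₃ : (fullGridGraph _).Adj v₂ v₃ :=
    fullGridGraph_adj.mpr (by simp [v₂, v₃, mem_unitVectors])
  have h₃₀ : (fullGridGraph _).Adj v₃ v₀ :=
    fullGridGraph_adj.mpr (by simp [v₃, v₀, mem_unitVectors])
  refine ⟨v₀, .cons h₀₁ (.cons h₁₂ (.cons h₂₃ (.cons h₃₀ .nil))),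
    Walk.isHamiltonianCycle_of_count_support_tail (by simp) fun z => ?_,
    fun y hy d hd _ => ?_⟩
  · obtain ⟨⟨z₁, z₂⟩, hz⟩ := z
    have hz' := mem_scale_two.mp hz
    simp only [cell, Set.mem_singleton_iff, Prod.mk.injEq] at hz'
    simp only [v₀, v₁, v₂, v₃, Walk.support_cons, Walk.support_nil, List.tail_cons,
      List.count_cons, List.count_nil, beq_iff_eq, Subtype.mk.injEq, Prod.mk.injEq]
    split_ifs <;> omega
  · rw [Set.mem_singleton_iff] at hy
    subst hy
    rw [mem_unitVectors] at hd
    rcases hd with rfl | rfl | rfl | rfl <;> simp [isSideEdge_mk, cell, v₀, v₁, v₂, v₃] <;> omega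

lemma HasBoundaryCycle.insert_add {Y : Set (ℤ × ℤ)} {q d : ℤ × ℤ} (hY : HasBoundaryCycle Y)
    (hq : q ∈ Y) (hd : d ∈ unitVectors) (hqd : q + d ∉ Y) :
    HasBoundaryCycle (insert (q + d) Y) := by
  classical
  obtain ⟨v, c, hc, hsides⟩ := hY
  obtain ⟨e, he, hside⟩ := hsides q hq d hd hqd
  obtain ⟨⟨a, b⟩, hab, rfl⟩ := List.mem_map.mp he
  rw [Sym2.map_mk] at hside
  have hsub : scale 2 Y ⊆ scale 2 (insert (q + d) Y) := fun z hz =>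
    mem_scale_two.mpr (Set.mem_insert_of_mem _ (mem_scale_two.mp hz))
  have hnew : ∀ z, cell z = q + d → z ∈ scale 2 (insert (q + d) Y) := fun z hz =>
    mem_scale_two.mpr (hz ▸ Set.mem_insert _ _)
  let f := fullGridGraphHomOfSubset hsub
  have hadj := c.adj_of_mem_edges hab
  have hab_ne : (a : ℤ × ℤ) ≠ b := fun h => hadj.ne (Subtype.ext h)
  obtain ⟨⟨ha₀, ha⟩, hb₀, hb⟩ := isSideEdge_mk.mp hside
  obtain ⟨P, hP, hPsupp, hPedges⟩ := exists_detour (a := f a) (b := f b) (f.map_adj hadj) hd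
    (hnew _ ha) (hnew _ (cell_add_add hd ha₀ ha)) (hnew _ (cell_add_add hd hb₀ hb)) (hnew _ hb)
    (hside.detour_nodup hd hab_ne)
  simp only [f, coe_fullGridGraphHomOfSubset] at hPsupp hPedges
  have hmem_supp : ∀ z, z ∈ P.support ↔ (z : ℤ × ℤ) ∈ P.support.map (↑) := fun z =>
    (List.mem_map_of_injective Subtype.val_injective).symm
  have hrange : ∀ w, f w ∈ P.support → w = a ∨ w = b := by
    intro w hw
    have hw' : (w : ℤ × ℤ) ∈ [(a : ℤ × ℤ), a + d, a + d + d, b + d + d, b + d, b] := by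
      rwa [hmem_supp, hPsupp] at hw
    have hwY : cell (w : ℤ × ℤ) ∈ Y := mem_scale_two.mp w.2
    simp only [List.mem_cons, List.not_mem_nil, or_false] at hw'
    rcases hw' with h | h | h | h | h | h
    · exact Or.inl (Subtype.ext h)
    · exact absurd (h ▸ hwY) (ha ▸ hqd)
    · exact absurd (h ▸ hwY) (cell_add_add hd ha₀ ha ▸ hqd)
    · exact absurd (h ▸ hwY) (cell_add_add hd hb₀ hb ▸ hqd)
    · exact absurd (h ▸ hwY) (hb ▸ hqd)
    · exact Or.inr (Subtype.ext h)
  have hcover : ∀ z, z ∉ Set.range f → z ∈ P.support := by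
    intro z hz
    have hz' : cell (z : ℤ × ℤ) = q + d := by
      rcases mem_scale_two.mp z.2 with h | h
      · exact h
      · exact absurd ⟨⟨z, mem_scale_two.mpr h⟩, rfl⟩ hz
    rw [hmem_supp, hPsupp]
    rcases hside.eq_of_cell_eq hd hab_ne hz' with h | h | h | h <;> simp [h]
  obtain ⟨y, c', hc', hPc', hold⟩ :=
    hc.exists_splice f (Set.inclusion_injective hsub) hab hP hrange hcover
  refine ⟨y, c', hc', fun x hx e he hxe => ?_⟩
  rcases hx with rfl | hx
  · have hne : e ≠ -d := by
      rintro rfl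
      exact hxe (Set.mem_insert_of_mem _ (by simpa using hq))
    obtain ⟨s, hs, hside'⟩ := hside.exists_detour_side hd hab_ne he hne
    refine ⟨s, List.map_subset _ hPc' ?_, hside'⟩
    rw [hPedges]
    simp only [List.mem_cons, List.not_mem_nil, or_false] at hs ⊢
    tauto
  · obtain ⟨e', he', hside'⟩ := hsides x hx e he (fun h => hxe (Set.mem_insert_of_mem _ h))
    obtain ⟨e'', he'', rfl⟩ := List.mem_map.mp he'
    refine ⟨_, List.mem_map_of_mem (hold e'' he'' ?_), by rwa [Sym2.map_map]⟩
    rintro rfl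
    obtain ⟨rfl, rfl⟩ := hside.eq_of_isSideEdge hd hab_ne he hside'
    exact hxe (Set.mem_insert _ _)

theorem IsShape.hasBoundaryCycle {X : Set (ℤ × ℤ)} (hX : IsShape X) (hfin : X.Finite)
    (hne : X.Nonempty) : HasBoundaryCycle X := by
  obtain ⟨x, rfl⟩ | hnt := hne.exists_eq_singleton_or_nontrivial
  · exact hasBoundaryCycle_singleton x
  obtain ⟨p, hp, q, hq, hpq, hY⟩ := hX.exists_isShape_sdiff_singleton hfin hnt
  have hqp : q + (p - q) ∉ X \ {p} := by simp
  have := (hY.hasBoundaryCycle hfin.sdiff ⟨q, hq⟩).insert_add hq hpq hqp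
  rwa [add_sub_cancel, Set.insert_sdiff_singleton, Set.insert_eq_of_mem hp] at this
termination_by X.ncard
decreasing_by exact Set.ncard_sdiff_singleton_lt_of_mem hp hfin

/-- For every nonempty finite shape `X ⊆ ℤ²`, the full grid graph on the
2-scaling `X²` of `X` contains a Hamiltonian cycle. -/
theorem stmt_0 (X : Set (ℤ × ℤ)) (hfin : X.Finite) (hne : X.Nonempty)
    (hX : IsShape X) :
    ∃ (v : scale 2 X) (w : (fullGridGraph (scale 2 X)).Walk v v),
      w.IsHamiltonianCycle := by
  obtain ⟨v, c, hc, -⟩ := hX.hasBoundaryCycle hfin hne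
  exact ⟨v, c, hc⟩
end

section
/- If X ⊆ ℤ² is a shape and c ∈ ℕ with c ≥ 1, then the c-scaling X^c is also a shape; that is, the full grid graph on X^c is connected. -/
lemma fdiv_eq_iff' {c : ℤ} (hc : 0 < c) {x a : ℤ} :
    x.fdiv c = a ↔ c * a ≤ x ∧ x < c * a + c := by
  rw [Int.fdiv_eq_ediv_of_nonneg _ hc.le]
  have h1 := Int.mul_ediv_add_emod x c
  have h2 := Int.emod_nonneg x hc.ne'
  have h3 := Int.emod_lt_of_pos x hc
  constructor
  · rintro rfl
    constructor <;> linarith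
  · rintro ⟨ha, hb⟩
    have l1 : a ≤ x / c := (Int.le_ediv_iff_mul_le hc).mpr (by linarith)
    have l2 : x / c < a + 1 := (Int.ediv_lt_iff_lt_mul hc).mpr (by linarith)
    omega

lemma adj_of (S : Set (ℤ × ℤ)) {p q : ℤ × ℤ} (hp : p ∈ S) (hq : q ∈ S)
    (h : p - q ∈ unitVectors) : (fullGridGraph S).Adj ⟨p, hp⟩ ⟨q, hq⟩ := by
  have hne : p ≠ q := by
    rintro rfl
    simp only [sub_self, unitVectors, Set.mem_insert_iff, Set.mem_singleton_iff,
      Prod.mk.injEq, Prod.ext_iff] at h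
    rcases h with h | h | h | h <;> simp_all
  exact (SimpleGraph.fromRel_adj _ _ _).mpr ⟨by simpa [Subtype.ext_iff] using hne, Or.inl h⟩

/-- horizontal segment reachability -/
lemma reach_hseg {S : Set (ℤ × ℤ)} (n : ℕ) :
    ∀ {y a : ℤ} (p q : S), (p : ℤ × ℤ) = (a, y) → (q : ℤ × ℤ) = (a + n, y) →
    (∀ x, a ≤ x → x ≤ a + n → (x, y) ∈ S) →
    (fullGridGraph S).Reachable p q := by
  induction n with
  | zero =>
    intro y a p q hp hq _
    have : p = q := Subtype.ext (by rw [hp, hq]; norm_num)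
    exact this ▸ SimpleGraph.Reachable.refl p
  | succ n ih =>
    intro y a p q hp hq h
    have hm : (a + (n : ℤ), y) ∈ S := h _ (by omega) (by push_cast; omega)
    have h1 : (fullGridGraph S).Reachable p ⟨(a + (n : ℤ), y), hm⟩ :=
      ih p _ hp rfl (fun x hx hx' => h x hx (by push_cast; omega))
    have hm2 : ((a + (n : ℤ) + 1, y) : ℤ × ℤ) ∈ S := h _ (by omega) (by push_cast; omega)
    have hq' : q = ⟨(a + (n : ℤ) + 1, y), hm2⟩ := Subtype.ext (by rw [hq]; push_cast; ring_nf)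
    have h2 : (fullGridGraph S).Adj ⟨(a + (n : ℤ), y), hm⟩ ⟨(a + (n : ℤ) + 1, y), hm2⟩ := by
      apply adj_of
      show ((a + (n:ℤ)) - (a + (n:ℤ) + 1), y - y) ∈ unitVectors
      simp only [unitVectors, Set.mem_insert_iff, Set.mem_singleton_iff, Prod.mk.injEq]
      right; right; right; constructor <;> ring
    exact hq' ▸ h1.trans h2.reachable

/-- vertical segment reachability -/
lemma reach_vseg {S : Set (ℤ × ℤ)} (n : ℕ) :
    ∀ {x a : ℤ} (p q : S), (p : ℤ × ℤ) = (x, a) → (q : ℤ × ℤ) = (x, a + n) →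
    (∀ y, a ≤ y → y ≤ a + n → (x, y) ∈ S) →
    (fullGridGraph S).Reachable p q := by
  induction n with
  | zero =>
    intro x a p q hp hq _
    have : p = q := Subtype.ext (by rw [hp, hq]; norm_num)
    exact this ▸ SimpleGraph.Reachable.refl p
  | succ n ih =>
    intro x a p q hp hq h
    have hm : (x, a + (n : ℤ)) ∈ S := h _ (by omega) (by push_cast; omega)
    have h1 : (fullGridGraph S).Reachable p ⟨(x, a + (n : ℤ)), hm⟩ :=
      ih p _ hp rfl (fun y hy hy' => h y hy (by push_cast; omega))
    have hm2 : ((x, a + (n : ℤ) + 1) : ℤ × ℤ) ∈ S := h _ (by omega) (by push_cast; omega)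
    have hq' : q = ⟨(x, a + (n : ℤ) + 1), hm2⟩ := Subtype.ext (by rw [hq]; push_cast; ring_nf)
    have h2 : (fullGridGraph S).Adj ⟨(x, a + (n : ℤ)), hm⟩ ⟨(x, a + (n : ℤ) + 1), hm2⟩ := by
      apply adj_of
      show (x - x, (a + (n:ℤ)) - (a + (n:ℤ) + 1)) ∈ unitVectors
      simp only [unitVectors, Set.mem_insert_iff, Set.mem_singleton_iff, Prod.mk.injEq]
      right; right; left; constructor <;> ring
    exact hq' ▸ h1.trans h2.reachable

section Main
variable {X : Set (ℤ × ℤ)} {c : ℕ}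

lemma rep_mem (hc0 : (0:ℤ) < (c:ℤ)) {a : ℤ × ℤ} (ha : a ∈ X) :
    ((c:ℤ) * a.1, (c:ℤ) * a.2) ∈ scale c X := by
  show ((((c:ℤ) * a.1).fdiv c), (((c:ℤ) * a.2).fdiv c)) ∈ X
  have h1 : ((c:ℤ) * a.1).fdiv c = a.1 := (fdiv_eq_iff' hc0).mpr ⟨le_rfl, by linarith⟩
  have h2 : ((c:ℤ) * a.2).fdiv c = a.2 := (fdiv_eq_iff' hc0).mpr ⟨le_rfl, by linarith⟩
  rw [h1, h2]
  simpa using ha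

/-- any point of a block reaches the representative of the block -/
lemma block_reach (hc0 : (0:ℤ) < (c:ℤ)) {p : ℤ × ℤ} (hp : p ∈ scale c X) :
    (fullGridGraph (scale c X)).Reachable
      ⟨((c:ℤ) * (p.1.fdiv c), (c:ℤ) * (p.2.fdiv c)),
        rep_mem hc0 (show (p.1.fdiv (c:ℤ), p.2.fdiv (c:ℤ)) ∈ X from hp)⟩ ⟨p, hp⟩ := by
  set a1 := p.1.fdiv c with ha1
  set a2 := p.2.fdiv c with ha2
  have hb1 : (c:ℤ) * a1 ≤ p.1 ∧ p.1 < (c:ℤ) * a1 + c := (fdiv_eq_iff' hc0).mp ha1.symm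
  have hb2 : (c:ℤ) * a2 ≤ p.2 ∧ p.2 < (c:ℤ) * a2 + c := (fdiv_eq_iff' hc0).mp ha2.symm
  have hmid : ((c:ℤ) * a1, p.2) ∈ scale c X := by
    show (((c:ℤ) * a1).fdiv c, a2) ∈ X
    rw [(fdiv_eq_iff' hc0).mpr ⟨le_rfl, by linarith⟩]
    exact hp
  have step2 : (fullGridGraph (scale c X)).Reachable
      ⟨((c:ℤ) * a1, p.2), hmid⟩ ⟨p, hp⟩ := by
    apply reach_hseg (S := scale c X) (p.1 - (c:ℤ) * a1).toNat
      (a := (c:ℤ) * a1) (y := p.2) _ _ rfl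
    · show p = ((c:ℤ) * a1 + ((p.1 - (c:ℤ) * a1).toNat : ℤ), p.2)
      rw [Int.toNat_of_nonneg (by omega)]
      exact Prod.ext (by ring) rfl
    · intro x hx hx'
      rw [Int.toNat_of_nonneg (by omega)] at hx'
      show (x.fdiv c, a2) ∈ X
      rw [(fdiv_eq_iff' hc0).mpr ⟨hx, by omega⟩]
      exact hp
  have step1 : (fullGridGraph (scale c X)).Reachable
      ⟨((c:ℤ) * a1, (c:ℤ) * a2),
        rep_mem hc0 (show (p.1.fdiv (c:ℤ), p.2.fdiv (c:ℤ)) ∈ X from hp)⟩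
      ⟨((c:ℤ) * a1, p.2), hmid⟩ := by
    apply reach_vseg (S := scale c X) (p.2 - (c:ℤ) * a2).toNat
      (a := (c:ℤ) * a2) (x := (c:ℤ) * a1) _ _ rfl
    · show ((c:ℤ) * a1, p.2) = ((c:ℤ) * a1, (c:ℤ) * a2 + ((p.2 - (c:ℤ) * a2).toNat : ℤ))
      rw [Int.toNat_of_nonneg (by omega)]
      exact Prod.ext rfl (by ring)
    · intro y hy hy'
      rw [Int.toNat_of_nonneg (by omega)] at hy'
      show (((c:ℤ) * a1).fdiv c, y.fdiv c) ∈ X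
      rw [(fdiv_eq_iff' hc0).mpr ⟨le_rfl, by linarith⟩,
        (fdiv_eq_iff' hc0).mpr (⟨hy, by omega⟩ : (c:ℤ) * a2 ≤ y ∧ y < (c:ℤ) * a2 + c)]
      exact hp
  exact step1.trans step2

lemma rep_vstep (hc0 : (0:ℤ) < (c:ℤ)) {u v : ℤ} (h0 : ((u, v) : ℤ × ℤ) ∈ X)
    (h1 : ((u, v + 1) : ℤ × ℤ) ∈ X) :
    (fullGridGraph (scale c X)).Reachable
      ⟨((c:ℤ) * u, (c:ℤ) * v), rep_mem hc0 h0⟩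
      ⟨((c:ℤ) * u, (c:ℤ) * (v + 1)), rep_mem hc0 h1⟩ := by
  apply reach_vseg (S := scale c X) c (a := (c:ℤ) * v) (x := (c:ℤ) * u) _ _ rfl
  · show ((c:ℤ) * u, (c:ℤ) * (v + 1)) = ((c:ℤ) * u, (c:ℤ) * v + (c:ℤ))
    exact Prod.ext rfl (by ring)
  · intro y hy hy'
    show (((c:ℤ) * u).fdiv c, y.fdiv c) ∈ X
    rw [(fdiv_eq_iff' hc0).mpr ⟨le_rfl, by linarith⟩]
    rcases lt_or_ge y ((c:ℤ) * v + c) with hcly | hcly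
    · rw [(fdiv_eq_iff' hc0).mpr ⟨hy, hcly⟩]; exact h0
    · rw [(fdiv_eq_iff' hc0).mpr
        (⟨by linarith, by linarith⟩ : (c:ℤ) * (v+1) ≤ y ∧ y < (c:ℤ) * (v+1) + c)]
      exact h1

lemma rep_hstep (hc0 : (0:ℤ) < (c:ℤ)) {u v : ℤ} (h0 : ((u, v) : ℤ × ℤ) ∈ X)
    (h1 : ((u + 1, v) : ℤ × ℤ) ∈ X) :
    (fullGridGraph (scale c X)).Reachable
      ⟨((c:ℤ) * u, (c:ℤ) * v), rep_mem hc0 h0⟩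
      ⟨((c:ℤ) * (u + 1), (c:ℤ) * v), rep_mem hc0 h1⟩ := by
  apply reach_hseg (S := scale c X) c (a := (c:ℤ) * u) (y := (c:ℤ) * v) _ _ rfl
  · show ((c:ℤ) * (u + 1), (c:ℤ) * v) = ((c:ℤ) * u + (c:ℤ), (c:ℤ) * v)
    exact Prod.ext (by ring) rfl
  · intro x hx hx'
    show (x.fdiv c, ((c:ℤ) * v).fdiv c) ∈ X
    rw [show ((c:ℤ) * v).fdiv c = v from (fdiv_eq_iff' hc0).mpr ⟨le_rfl, by linarith⟩]
    rcases lt_or_ge x ((c:ℤ) * u + c) with hclx | hclx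
    · rw [(fdiv_eq_iff' hc0).mpr ⟨hx, hclx⟩]; exact h0
    · rw [(fdiv_eq_iff' hc0).mpr
        (⟨by linarith, by linarith⟩ : (c:ℤ) * (u+1) ≤ x ∧ x < (c:ℤ) * (u+1) + c)]
      exact h1

lemma rep_adj (hc0 : (0:ℤ) < (c:ℤ)) {a b : ℤ × ℤ} (ha : a ∈ X) (hb : b ∈ X)
    (h : a - b ∈ unitVectors) :
    (fullGridGraph (scale c X)).Reachable
      ⟨((c:ℤ) * a.1, (c:ℤ) * a.2), rep_mem hc0 ha⟩
      ⟨((c:ℤ) * b.1, (c:ℤ) * b.2), rep_mem hc0 hb⟩ := by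
  obtain ⟨a1, a2⟩ := a
  obtain ⟨b1, b2⟩ := b
  simp only [unitVectors, Prod.mk_sub_mk, Set.mem_insert_iff, Set.mem_singleton_iff,
    Prod.mk.injEq] at h
  rcases h with ⟨h1, h2⟩ | ⟨h1, h2⟩ | ⟨h1, h2⟩ | ⟨h1, h2⟩
  · obtain rfl : a1 = b1 := by omega
    obtain rfl : a2 = b2 + 1 := by omega
    exact (rep_vstep hc0 hb ha).symm
  · obtain rfl : a2 = b2 := by omega
    obtain rfl : a1 = b1 + 1 := by omega
    exact (rep_hstep hc0 hb ha).symm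
  · obtain rfl : a1 = b1 := by omega
    obtain rfl : b2 = a2 + 1 := by omega
    exact rep_vstep hc0 ha hb
  · obtain rfl : a2 = b2 := by omega
    obtain rfl : b1 = a1 + 1 := by omega
    exact rep_hstep hc0 ha hb

end Main

/-- If `X ⊆ ℤ²` is a shape and `c ≥ 1`, then the `c`-scaling `X^c` is also a
shape, i.e., the full grid graph on `X^c` is connected. -/
theorem stmt_3 (X : Set (ℤ × ℤ)) (hX : IsShape X) (c : ℕ) (hc : 1 ≤ c) :
    IsShape (scale c X) := by
  have hc0 : (0:ℤ) < (c:ℤ) := by exact_mod_cast hc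
  have key : ∀ (a b : X), (fullGridGraph X).Reachable a b →
      (fullGridGraph (scale c X)).Reachable
        ⟨((c:ℤ) * (a:ℤ×ℤ).1, (c:ℤ) * (a:ℤ×ℤ).2), rep_mem hc0 a.2⟩
        ⟨((c:ℤ) * (b:ℤ×ℤ).1, (c:ℤ) * (b:ℤ×ℤ).2), rep_mem hc0 b.2⟩ := by
    intro a b h
    obtain ⟨w⟩ := h
    induction w with
    | nil => exact SimpleGraph.Reachable.refl _
    | cons hadj w ih =>
      rename_i u v t
      have hstep := (SimpleGraph.fromRel_adj _ _ _).mp hadj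
      have hr : (fullGridGraph (scale c X)).Reachable
          ⟨((c:ℤ) * (u:ℤ×ℤ).1, (c:ℤ) * (u:ℤ×ℤ).2), rep_mem hc0 u.2⟩
          ⟨((c:ℤ) * (v:ℤ×ℤ).1, (c:ℤ) * (v:ℤ×ℤ).2), rep_mem hc0 v.2⟩ := by
        rcases hstep.2 with hd | hd
        · exact rep_adj hc0 u.2 v.2 hd
        · exact (rep_adj hc0 v.2 u.2 hd).symm
      exact hr.trans ih
  rw [IsShape, SimpleGraph.connected_iff]
  obtain ⟨a0⟩ := hX.nonempty
  refine ⟨?_, ⟨⟨((c:ℤ) * (a0:ℤ×ℤ).1, (c:ℤ) * (a0:ℤ×ℤ).2), rep_mem hc0 a0.2⟩⟩⟩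
  rintro ⟨p, hp⟩ ⟨q, hq⟩
  have hp' : (p.1.fdiv (c:ℤ), p.2.fdiv (c:ℤ)) ∈ X := hp
  have hq' : (q.1.fdiv (c:ℤ), q.2.fdiv (c:ℤ)) ∈ X := hq
  have h1 := block_reach (X := X) hc0 hp
  have h2 := block_reach (X := X) hc0 hq
  have h3 := key ⟨_, hp'⟩ ⟨_, hq'⟩ (hX.preconnected _ _)
  exact (h1.symm.trans h3).trans h2
end
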